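/- Let B be a fuzzy ideal of a fuzzy Riesz space X. Then the following are equivalent: (i) B is a fuzzy projection band (X = B ⊕ B^d); (ii) for each x ∈ X⁺ the supremum of the set B⁺ ∩ [0,x] = {y ∈ B : μ(0,y)>1/2 and μ(y,x)>1/2} exists in X and belongs to B; (iii) there exists a fuzzy ideal I of X with I ∩ B = {0} and X = I + B. -/

import Mathlib

/-- A fuzzy Riesz space structure on a real vector space `X`:
a fuzzy order `μ : X × X → [0,1]` compatible with the vector structure,
together with binary suprema and infima with respect to the fuzzy order. -/
structure FuzzyRiesz (X : Type*) [AddCommGroup X] [Module ℝ X] where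
  μ : X → X → ℝ
  nonneg : ∀ x y : X, 0 ≤ μ x y
  le_one : ∀ x y : X, μ x y ≤ 1
  refl : ∀ x : X, μ x x = 1
  antisymm : ∀ x y : X, 1 < μ x y + μ y x → x = y
  trans : ∀ x y z : X, min (μ x y) (μ y z) ≤ μ x z
  add_compat : ∀ x y z : X, 1/2 < μ x y → μ x y ≤ μ (x + z) (y + z)
  smul_compat : ∀ (x y : X) (c : ℝ), 0 ≤ c → 1/2 < μ x y → μ x y ≤ μ (c • x) (c • y)
  sup : X → X → X
  inf : X → X → X
  le_sup_left : ∀ x y : X, 1/2 < μ x (sup x y)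
  le_sup_right : ∀ x y : X, 1/2 < μ y (sup x y)
  sup_le : ∀ x y z : X, 1/2 < μ x z → 1/2 < μ y z → 1/2 < μ (sup x y) z
  inf_le_left : ∀ x y : X, 1/2 < μ (inf x y) x
  inf_le_right : ∀ x y : X, 1/2 < μ (inf x y) y
  le_inf : ∀ x y z : X, 1/2 < μ z x → 1/2 < μ z y → 1/2 < μ z (inf x y)

namespace FuzzyRiesz

universe v

variable {X : Type*} [AddCommGroup X] [Module ℝ X]

/-- The absolute value `|x| = x ∨ (−x)`. -/
def fabs (F : FuzzyRiesz X) (x : X) : X := F.sup x (-x)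

/-- `x` is positive: `μ(0,x) > 1/2`. -/
def Pos (F : FuzzyRiesz X) (x : X) : Prop := 1/2 < F.μ 0 x

/-- `S⁺`, the set of positive elements of `S`. -/
def posPart (F : FuzzyRiesz X) (S : Set X) : Set X := {x ∈ S | F.Pos x}

/-- `y` is an upper bound of `A`. -/
def UpperBound (F : FuzzyRiesz X) (A : Set X) (y : X) : Prop := ∀ x ∈ A, 1/2 < F.μ x y

/-- `y` is a lower bound of `A`. -/
def LowerBound (F : FuzzyRiesz X) (A : Set X) (y : X) : Prop := ∀ x ∈ A, 1/2 < F.μ y x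

/-- `z = sup A` in the fuzzy order. -/
def IsSup (F : FuzzyRiesz X) (A : Set X) (z : X) : Prop :=
  F.UpperBound A z ∧ ∀ y : X, F.UpperBound A y → 1/2 < F.μ z y

/-- `z = inf A` in the fuzzy order. -/
def IsInf (F : FuzzyRiesz X) (A : Set X) (z : X) : Prop :=
  F.LowerBound A z ∧ ∀ y : X, F.LowerBound A y → 1/2 < F.μ y z

/-- `z = inf A`, computed relative to the subset `Y` (lower bounds taken in `Y`). -/
def IsInfIn (F : FuzzyRiesz X) (Y A : Set X) (z : X) : Prop :=
  F.LowerBound A z ∧ ∀ y ∈ Y, F.LowerBound A y → 1/2 < F.μ y z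

/-- A set is fuzzy solid if `μ(|x|,|y|) > 1/2` and `y ∈ A` imply `x ∈ A`. -/
def Solid (F : FuzzyRiesz X) (A : Set X) : Prop :=
  ∀ x y : X, 1/2 < F.μ (F.fabs x) (F.fabs y) → y ∈ A → x ∈ A

/-- A fuzzy ideal: a fuzzy solid vector subspace. -/
structure IsIdeal (F : FuzzyRiesz X) (I : Set X) : Prop where
  zero_mem : (0 : X) ∈ I
  add_mem : ∀ {x y : X}, x ∈ I → y ∈ I → x + y ∈ I
  smul_mem : ∀ (c : ℝ) {x : X}, x ∈ I → c • x ∈ I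
  solid : ∀ x y : X, 1/2 < F.μ (F.fabs x) (F.fabs y) → y ∈ I → x ∈ I

/-- A fuzzy ideal of the subspace `Y` (with the restricted fuzzy order and
vector structure): a vector subspace of `Y` that is solid relative to `Y`. -/
structure IsIdealIn (F : FuzzyRiesz X) (Y I : Set X) : Prop where
  subset : I ⊆ Y
  zero_mem : (0 : X) ∈ I
  add_mem : ∀ {x y : X}, x ∈ I → y ∈ I → x + y ∈ I
  smul_mem : ∀ (c : ℝ) {x : X}, x ∈ I → c • x ∈ I
  solid : ∀ x ∈ Y, ∀ y ∈ I, 1/2 < F.μ (F.fabs x) (F.fabs y) → x ∈ I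

/-- A decreasing net. -/
def Decreasing (F : FuzzyRiesz X) {ι : Type v} [Preorder ι] (y : ι → X) : Prop :=
  ∀ a b : ι, a ≤ b → 1/2 < F.μ (y b) (y a)

/-- An increasing net. -/
def Increasing (F : FuzzyRiesz X) {ι : Type v} [Preorder ι] (x : ι → X) : Prop :=
  ∀ a b : ι, a ≤ b → 1/2 < F.μ (x a) (x b)

/-- The net `x` converges in fuzzy order to `l`: there is a net `y` over the same
index set with `μ(|x_α − l|, y_α) > 1/2` for all `α` and `y_α ↓ 0`. -/
def FuzzyOrderConv (F : FuzzyRiesz X) {ι : Type v} [Preorder ι] (x : ι → X) (l : X) : Prop :=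
  ∃ y : ι → X, (∀ a, 1/2 < F.μ (F.fabs (x a - l)) (y a)) ∧ F.Decreasing y ∧
    F.IsInf (Set.range y) 0

/-- Fuzzy order convergence relative to the subset `Y` (the dominating net lies in `Y`
and its infimum is computed in `Y`). -/
def FuzzyOrderConvIn (F : FuzzyRiesz X) (Y : Set X) {ι : Type v} [Preorder ι]
    (x : ι → X) (l : X) : Prop :=
  ∃ y : ι → X, (∀ a, y a ∈ Y) ∧ (∀ a, 1/2 < F.μ (F.fabs (x a - l)) (y a)) ∧ F.Decreasing y ∧
    F.IsInfIn Y (Set.range y) 0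

/-- `S` is fuzzy σ-order closed: closed under fuzzy order limits of sequences in `S`. -/
def SigmaOrderClosed (F : FuzzyRiesz X) (S : Set X) : Prop :=
  ∀ (x : ℕ → X) (l : X), (∀ n, x n ∈ S) → F.FuzzyOrderConv x l → l ∈ S

/-- `S` is fuzzy order closed: closed under fuzzy order limits of nets in `S`. -/
def OrderClosed (F : FuzzyRiesz X) (S : Set X) : Prop :=
  ∀ (ι : Type v) [Preorder ι] [Nonempty ι] [IsDirected ι (· ≤ ·)],
    ∀ (x : ι → X) (l : X), (∀ a, x a ∈ S) → F.FuzzyOrderConv x l → l ∈ S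

/-- `S` is fuzzy order closed in the subspace `Y`. -/
def OrderClosedIn (F : FuzzyRiesz X) (Y S : Set X) : Prop :=
  ∀ (ι : Type v) [Preorder ι] [Nonempty ι] [IsDirected ι (· ≤ ·)],
    ∀ (x : ι → X) (l : X), (∀ a, x a ∈ S) → l ∈ Y → F.FuzzyOrderConvIn Y x l → l ∈ S

/-- A fuzzy band: a fuzzy order closed fuzzy ideal. -/
def IsBand (F : FuzzyRiesz X) (B : Set X) : Prop := F.IsIdeal B ∧ OrderClosed.{v} F B

/-- A fuzzy band of the subspace `Y`. -/
def IsBandIn (F : FuzzyRiesz X) (Y B : Set X) : Prop := F.IsIdealIn Y B ∧ OrderClosedIn.{v} F Y B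

/-- The disjoint complement `A^d = {x : |x| ∧ |y| = 0 for all y ∈ A}`. -/
def dcomp (F : FuzzyRiesz X) (A : Set X) : Set X :=
  {x : X | ∀ y ∈ A, F.inf (F.fabs x) (F.fabs y) = 0}

/-- The algebraic sum of two subsets. -/
def sumSet (A B : Set X) : Set X := {z : X | ∃ a ∈ A, ∃ b ∈ B, z = a + b}

/-- `S` is fuzzy order dense in `X`. -/
def OrderDense (F : FuzzyRiesz X) (S : Set X) : Prop :=
  ∀ x : X, x ≠ 0 → F.Pos x → ∃ y ∈ S, y ≠ 0 ∧ 1/2 < F.μ y x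

/-- `S` is fuzzy order dense in the subspace `Y`. -/
def OrderDenseIn (F : FuzzyRiesz X) (Y S : Set X) : Prop :=
  ∀ x ∈ Y, x ≠ 0 → F.Pos x → ∃ y ∈ S, y ≠ 0 ∧ 1/2 < F.μ y x

/-- `x` is nonnegative: it is not the case that `μ(x,0) > 1/2`. -/
def Nonneg (F : FuzzyRiesz X) (x : X) : Prop := ¬ (1/2 < F.μ x 0)

/-- `X` is fuzzy Archimedean: for every nonzero nonnegative `x`, the set
`{λ • x : λ > 0}` has no upper bound. -/
def FuzzyArchimedean (F : FuzzyRiesz X) : Prop :=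
  ∀ x : X, x ≠ 0 → F.Nonneg x →
    ¬ ∃ y : X, F.UpperBound {z : X | ∃ c : ℝ, 0 < c ∧ z = c • x} y

/-- `X` is fuzzy Dedekind complete. -/
def DedekindComplete (F : FuzzyRiesz X) : Prop :=
  ∀ A : Set X, A.Nonempty → (∃ y, F.UpperBound A y) → ∃ z, F.IsSup A z

/-- `X` is fuzzy Dedekind σ-complete. -/
def DedekindSigmaComplete (F : FuzzyRiesz X) : Prop :=
  ∀ A : Set X, A.Nonempty → A.Countable →
    ((∃ y, F.UpperBound A y) → ∃ z, F.IsSup A z) ∧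
    ((∃ y, F.LowerBound A y) → ∃ z, F.IsInf A z)

/-- `D` is directed to the right. -/
def DirectedRight (F : FuzzyRiesz X) (D : Set X) : Prop :=
  ∀ E : Set X, E ⊆ D → E.Finite → ∃ d ∈ D, ∀ e ∈ E, 1/2 < F.μ e d

/-- `B` is a fuzzy projection band: a fuzzy band such that every `x ∈ X` decomposes
uniquely as `x = x₁ + x₂` with `x₁ ∈ B`, `x₂ ∈ B^d`. -/
def IsProjBand (F : FuzzyRiesz X) (B : Set X) : Prop :=
  IsBand.{v} F B ∧ ∀ x : X, ∃! p : X × X, p.1 ∈ B ∧ p.2 ∈ F.dcomp B ∧ x = p.1 + p.2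

/-- There is an increasing net of elements of `S`, over some nonempty directed
preordered index set, whose supremum is `l`. -/
def IncNetSup (F : FuzzyRiesz X) (S : Set X) (l : X) : Prop :=
  ∃ (ι : Type v) (r : ι → ι → Prop), Nonempty ι ∧ (∀ a, r a a) ∧
    (∀ a b c, r a b → r b c → r a c) ∧ (∀ a b, ∃ c, r a c ∧ r b c) ∧
    ∃ net : ι → X, (∀ a, net a ∈ S) ∧ (∀ a b, r a b → 1/2 < F.μ (net a) (net b)) ∧
      F.IsSup (Set.range net) l

end FuzzyRiesz

/-!
The crisp relation `x ≤ y :↔ μ(x, y) > 1/2` is a lattice order, with `sup` and `inf` as joins and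
meets, that is compatible with addition and with multiplication by nonnegative scalars. So a fuzzy
Riesz space is an ordinary Riesz space, and all three conditions turn out to be equivalent to
`X = B^d + B`. Given (ii) and `x ≥ 0`, the remainder `x - z` after `z = sup (B⁺ ∩ [0, x])` is
disjoint from `B`, since otherwise `z + ((x - z) ∧ |y|)` would exceed `z`; writing `x = x⁺ - x⁻`
decomposes every element. Conversely, if `x = a + b` with `a ∈ B^d` and `b ∈ B`, then `b` is that
supremum, the decomposition is unique because `B ∩ B^d = 0`, and `B` is order closed because
`|a| ≤ |l - x_α|` for every net `x_α` in `B` and `l = a + b`. A solid `I` with `I ∩ B = 0`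
lies in `B^d`, which gives (iii).
-/

open scoped Pointwise

namespace LatticeOrderedAddCommGroup

section Lattice

variable {α : Type*} [Lattice α] [Zero α] {a b c : α}

theorem inf_eq_zero_of_le (ha : 0 ≤ a) (hc : 0 ≤ c) (hab : a ≤ b) (hbc : b ⊓ c = 0) :
    a ⊓ c = 0 :=
  le_antisymm (hbc ▸ inf_le_inf_right c hab) (le_inf ha hc)

end Lattice

section Module

variable {α R : Type*} [Lattice α] [AddCommGroup α] [Ring R] [LinearOrder R] [IsOrderedRing R]
  [Module R α] [PosSMulMono R α]

theorem abs_smul_le (c : R) (x : α) : |c • x| ≤ |c| • |x| := by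
  have key : ∀ c : R, 0 ≤ c → ∀ x : α, |c • x| ≤ c • |x| := fun c hc x =>
    abs_le'.2 ⟨smul_le_smul_of_nonneg_left (le_abs_self x) hc,
      smul_neg c x ▸ smul_le_smul_of_nonneg_left (neg_le_abs x) hc⟩
  rcases le_total 0 c with hc | hc
  · rw [abs_of_nonneg hc]; exact key c hc x
  · rw [abs_of_nonpos hc, ← abs_neg x, ← neg_smul_neg]; exact key (-c) (neg_nonneg.2 hc) (-x)

end Module

variable {α : Type*} [Lattice α] [AddCommGroup α] [IsOrderedAddMonoid α] {a b c x z : α}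

theorem eq_zero_of_abs_nonpos (h : |x| ≤ 0) : x = 0 :=
  le_antisymm ((le_abs_self x).trans h) (neg_nonpos.1 ((neg_le_abs x).trans h))

theorem add_inf_le_inf_add_inf (ha : 0 ≤ a) (hb : 0 ≤ b) (hc : 0 ≤ c) :
    (a + b) ⊓ c ≤ a ⊓ c + b ⊓ c := by
  rw [add_inf, inf_add, inf_add]
  exact le_inf (le_inf inf_le_left (inf_le_right.trans (le_add_of_nonneg_right hb)))
    (le_inf (inf_le_right.trans (le_add_of_nonneg_left ha))
      (inf_le_right.trans (le_add_of_nonneg_left hc)))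

theorem add_inf_eq_zero (ha : 0 ≤ a) (hb : 0 ≤ b) (hc : 0 ≤ c) (hac : a ⊓ c = 0)
    (hbc : b ⊓ c = 0) : (a + b) ⊓ c = 0 :=
  le_antisymm (by simpa [hac, hbc] using add_inf_le_inf_add_inf ha hb hc)
    (le_inf (add_nonneg ha hb) hc)

theorem nsmul_inf_eq_zero (ha : 0 ≤ a) (hc : 0 ≤ c) (hac : a ⊓ c = 0) (n : ℕ) :
    (n • a) ⊓ c = 0 := by
  induction n with
  | zero => simpa using inf_eq_left.2 hc
  | succ n ih => rw [succ_nsmul]; exact add_inf_eq_zero (nsmul_nonneg ha n) ha hc ih hac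

theorem abs_le_abs_sub_of_abs_inf_abs_eq_zero (h : |a| ⊓ |c| = 0) : |a| ≤ |a - c| := by
  have h₁ : |a| ≤ |a - c| + |c| := by simpa using abs_add_le (a - c) c
  calc |a| = |a| ⊓ (|a - c| + |c|) := (inf_eq_left.2 h₁).symm
    _ ≤ |a| ⊓ |a - c| + |a| ⊓ |c| := by
      simpa only [inf_comm |a|] using add_inf_le_inf_add_inf (abs_nonneg _) (abs_nonneg _)
        (abs_nonneg a)
    _ ≤ |a - c| := by rw [h, add_zero]; exact inf_le_right

theorem nonneg_of_abs_inf_abs_eq_zero_of_add_nonneg (h : |a| ⊓ |b| = 0) (hab : 0 ≤ a + b) :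
    0 ≤ a := by
  have ha : a⁻ ≤ |a| := sup_le (neg_le_abs a) (abs_nonneg a)
  have hb : a⁻ ≤ |b| :=
    sup_le ((neg_le_iff_add_nonneg'.2 hab).trans (le_abs_self b)) (abs_nonneg b)
  rw [← negPart_eq_zero]
  exact le_antisymm (h ▸ le_inf ha hb) (negPart_nonneg a)

def disjointComplement (s : Set α) : AddSubgroup α where
  carrier := {x | ∀ y ∈ s, |x| ⊓ |y| = 0}
  zero_mem' y _ := by simp
  add_mem' {x x'} hx hx' y hy :=
    inf_eq_zero_of_le (abs_nonneg _) (abs_nonneg y) (abs_add_le x x')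
      (add_inf_eq_zero (abs_nonneg x) (abs_nonneg x') (abs_nonneg y) (hx y hy) (hx' y hy))
  neg_mem' {x} hx y hy := by simpa using hx y hy

theorem isSolid_disjointComplement (s : Set α) : IsSolid (disjointComplement s : Set α) :=
  fun _ hx y hyx z hz => inf_eq_zero_of_le (abs_nonneg y) (abs_nonneg z) hyx (hx z hz)

theorem smul_mem_disjointComplement {R : Type*} [Ring R] [LinearOrder R] [IsOrderedRing R]
    [Archimedean R] [Module R α] [PosSMulMono R α] {s : Set α} (c : R)
    (hx : x ∈ disjointComplement s) : c • x ∈ disjointComplement s := by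
  obtain ⟨n, hn⟩ := exists_nat_ge |c|
  intro y hy
  refine inf_eq_zero_of_le (abs_nonneg _) (abs_nonneg y) ?_
    (nsmul_inf_eq_zero (abs_nonneg x) (abs_nonneg y) (hx y hy) n)
  calc |c • x| ≤ |c| • |x| := abs_smul_le c x
    _ ≤ (n : R) • |x| := smul_le_smul_of_nonneg_right hn (abs_nonneg x)
    _ = n • |x| := Nat.cast_smul_eq_nsmul R n |x|

theorem eq_zero_of_mem_disjointComplement {s : Set α} (hx : x ∈ s)
    (hxd : x ∈ disjointComplement s) : x = 0 :=
  eq_zero_of_abs_nonpos (inf_idem |x| ▸ hxd x hx).le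

theorem disjointComplement_inter_eq_singleton_zero {B : AddSubgroup α} :
    (disjointComplement (B : Set α) : Set α) ∩ B = {0} :=
  Set.eq_singleton_iff_unique_mem.2 ⟨⟨zero_mem _, zero_mem B⟩,
    fun _ hx => eq_zero_of_mem_disjointComplement hx.2 hx.1⟩

theorem subset_disjointComplement {I B : Set α} (hI : IsSolid I) (hB : IsSolid B)
    (hIB : I ∩ B ⊆ {0}) : I ⊆ disjointComplement B := by
  intro a ha b hb
  have hw : |(|a| ⊓ |b|)| = |a| ⊓ |b| := abs_of_nonneg (le_inf (abs_nonneg a) (abs_nonneg b))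
  exact hIB ⟨hI ha (hw.trans_le inf_le_left), hB hb (hw.trans_le inf_le_right)⟩

theorem eq_of_add_eq_add_of_mem_disjointComplement {B : AddSubgroup α} {a a' b b' : α}
    (ha : a ∈ disjointComplement (B : Set α)) (ha' : a' ∈ disjointComplement (B : Set α))
    (hb : b ∈ B) (hb' : b' ∈ B) (h : a + b = a' + b') : a = a' ∧ b = b' := by
  have hd : b - b' = a' - a := by rw [sub_eq_sub_iff_add_eq_add, add_comm, h, add_comm]
  have h0 : b - b' = 0 := eq_zero_of_mem_disjointComplement (sub_mem hb hb')
    (hd ▸ sub_mem ha' ha)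
  rw [hd, sub_eq_zero] at h0
  exact ⟨h0.symm, by rw [h0] at h; exact add_left_cancel h⟩

section Projection

variable {B : AddSubgroup α}

theorem sub_mem_disjointComplement_of_isLUB (hB : IsSolid (B : Set α)) (hx : 0 ≤ x)
    (hzB : z ∈ B) (hz : IsLUB ((B : Set α) ∩ Set.Icc 0 x) z) :
    x - z ∈ disjointComplement (B : Set α) := by
  have hz0 : 0 ≤ z := hz.1 ⟨zero_mem B, le_rfl, hx⟩
  have hd : 0 ≤ x - z := sub_nonneg.2 (hz.2 fun _ hy => hy.2.2)
  intro y hy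
  set w := (x - z) ⊓ |y|
  have hw0 : 0 ≤ w := le_inf hd (abs_nonneg y)
  have hwB : w ∈ B := hB hy <| by rw [abs_of_nonneg hw0]; exact inf_le_right
  -- `z + w` is another element of `B ∩ [0, x]`, so `w ≤ 0`.
  have hzw : z + w ≤ z := hz.1 ⟨add_mem hzB hwB, add_nonneg hz0 hw0,
    le_sub_iff_add_le'.1 inf_le_left⟩
  rw [abs_of_nonneg hd]
  exact le_antisymm (by simpa using hzw) hw0

theorem isLUB_inter_Icc_of_mem_disjointComplement {a b : α}
    (ha : a ∈ disjointComplement (B : Set α)) (hb : b ∈ B) (hab : 0 ≤ a + b) :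
    IsLUB ((B : Set α) ∩ Set.Icc 0 (a + b)) b := by
  have hb0 : 0 ≤ b := nonneg_of_abs_inf_abs_eq_zero_of_add_nonneg
    (inf_comm |a| |b| ▸ ha b hb) (add_comm a b ▸ hab)
  have ha0 : 0 ≤ a := nonneg_of_abs_inf_abs_eq_zero_of_add_nonneg (ha b hb) hab
  refine ⟨fun y ⟨hyB, _, hyx⟩ => ?_, fun u hu => hu ⟨hb, hb0, le_add_of_nonneg_left ha0⟩⟩
  have hd : |-(y - b)| ⊓ |a| = 0 := by rw [abs_neg, inf_comm]; exact ha _ (sub_mem hyB hb)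
  simpa using nonneg_of_abs_inf_abs_eq_zero_of_add_nonneg hd (by
    rw [neg_sub, sub_add_eq_add_sub, add_comm b a, sub_nonneg]; exact hyx)

theorem disjointComplement_add_eq_univ_iff (hB : IsSolid (B : Set α)) :
    (disjointComplement (B : Set α) : Set α) + (B : Set α) = Set.univ ↔
      ∀ x, 0 ≤ x → ∃ z ∈ B, IsLUB ((B : Set α) ∩ Set.Icc 0 x) z := by
  constructor
  · intro h x hx
    obtain ⟨a, ha, b, hb, rfl⟩ := Set.mem_add.1 (h ▸ Set.mem_univ x)
    exact ⟨b, hb, isLUB_inter_Icc_of_mem_disjointComplement ha hb hx⟩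
  · intro h
    have hpos : ∀ x, 0 ≤ x → x ∈ (disjointComplement (B : Set α) : Set α) + (B : Set α) := by
      intro x hx
      obtain ⟨z, hzB, hz⟩ := h x hx
      exact ⟨x - z, sub_mem_disjointComplement_of_isLUB hB hx hzB hz, z, hzB, sub_add_cancel x z⟩
    refine Set.eq_univ_of_forall fun x => ?_
    obtain ⟨a, ha, b, hb, hab⟩ := Set.mem_add.1 (hpos _ (posPart_nonneg x))
    obtain ⟨a', ha', b', hb', hab'⟩ := Set.mem_add.1 (hpos _ (negPart_nonneg x))
    refine Set.mem_add.2 ⟨a - a', sub_mem ha ha', b - b', sub_mem hb hb', ?_⟩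
    rw [← posPart_sub_negPart x, ← hab, ← hab', sub_add_sub_comm]

theorem mem_of_abs_sub_le_of_isGLB
    (hB : (disjointComplement (B : Set α) : Set α) + (B : Set α) = Set.univ) {ι : Type*}
    {x y : ι → α} {l : α} (hxB : ∀ i, x i ∈ B) (hxy : ∀ i, |x i - l| ≤ y i)
    (hy : IsGLB (Set.range y) 0) : l ∈ B := by
  obtain ⟨a, ha, b, hb, rfl⟩ := Set.mem_add.1 (hB ▸ Set.mem_univ l)
  have hlow : |a| ∈ lowerBounds (Set.range y) := by
    rintro _ ⟨i, rfl⟩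
    calc |a| ≤ |a - (x i - b)| :=
          abs_le_abs_sub_of_abs_inf_abs_eq_zero (ha _ (sub_mem (hxB i) hb))
      _ = |x i - (a + b)| := by rw [← abs_neg]; congr 1; abel
      _ ≤ y i := hxy i
  rw [eq_zero_of_abs_nonpos (hy.2 hlow), zero_add]
  exact hb

end Projection

end LatticeOrderedAddCommGroup

namespace FuzzyRiesz

open LatticeOrderedAddCommGroup

theorem sumSet_eq_add {X : Type*} [AddCommGroup X] (A B : Set X) : sumSet A B = A + B := by
  ext; simp [sumSet, Set.mem_add, eq_comm]

variable {X : Type*} [AddCommGroup X] [Module ℝ X] {F : FuzzyRiesz X} {B : Set X}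

/-- Under this instance `F.Pos`, `F.IsSup`, `F.IsInf` and `F.dcomp` are definitionally `0 ≤ ·`,
`IsLUB`, `IsGLB` and `disjointComplement`, which is how the general lemmas apply below. -/
abbrev toLattice (F : FuzzyRiesz X) : Lattice X where
  le x y := 1/2 < F.μ x y
  le_refl x := by simp only [F.refl]; norm_num
  le_trans x y z hxy hyz := (lt_min hxy hyz).trans_le (F.trans x y z)
  le_antisymm x y hxy hyx := F.antisymm x y (by linarith)
  sup := F.sup
  le_sup_left := F.le_sup_left
  le_sup_right := F.le_sup_right
  sup_le := F.sup_le
  inf := F.inf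
  inf_le_left := F.inf_le_left
  inf_le_right := F.inf_le_right
  le_inf x y z hxy hxz := F.le_inf y z x hxy hxz

theorem isOrderedAddMonoid (F : FuzzyRiesz X) : letI := F.toLattice; IsOrderedAddMonoid X :=
  letI := F.toLattice
  { add_le_add_left := fun x y h z => h.trans_le (F.add_compat x y z h) }

theorem posSMulMono (F : FuzzyRiesz X) : letI := F.toLattice; PosSMulMono ℝ X :=
  letI := F.toLattice
  ⟨fun c hc x y h => h.trans_le (F.smul_compat x y c hc h)⟩

theorem IsIdeal.isSolid (hB : F.IsIdeal B) : letI := F.toLattice; IsSolid B :=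
  fun _ hx _ hyx => hB.solid _ _ hyx hx

def IsIdeal.toAddSubgroup (hB : F.IsIdeal B) : AddSubgroup X where
  carrier := B
  zero_mem' := hB.zero_mem
  add_mem' := hB.add_mem
  neg_mem' hx := by simpa using hB.smul_mem (-1) hx

theorem isIdeal_dcomp (F : FuzzyRiesz X) (A : Set X) : F.IsIdeal (F.dcomp A) := by
  let := F.toLattice; have := F.isOrderedAddMonoid; have := F.posSMulMono
  exact { zero_mem := (disjointComplement A).zero_mem
          add_mem := (disjointComplement A).add_mem
          smul_mem := fun c _ hx => smul_mem_disjointComplement c hx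
          solid := fun _ _ h hy => isSolid_disjointComplement A hy h }

theorem forall_isSup_iff_dcomp_add_eq_univ (hB : F.IsIdeal B) :
    (∀ x : X, F.Pos x → ∃ z ∈ B, F.IsSup {y : X | y ∈ B ∧ F.Pos y ∧ 1/2 < F.μ y x} z) ↔
      F.dcomp B + B = Set.univ := by
  let := F.toLattice; have := F.isOrderedAddMonoid
  exact (disjointComplement_add_eq_univ_iff (B := hB.toAddSubgroup) hB.isSolid).symm

theorem orderClosed_of_dcomp_add_eq_univ (hB : F.IsIdeal B) (h : F.dcomp B + B = Set.univ) :
    OrderClosed.{v} F B := by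
  let := F.toLattice; have := F.isOrderedAddMonoid
  rintro ι _ _ _ x l hxB ⟨y, hxy, -, hy⟩
  exact mem_of_abs_sub_le_of_isGLB (B := hB.toAddSubgroup) h hxB hxy hy

theorem isProjBand_iff_dcomp_add_eq_univ (hB : F.IsIdeal B) :
    IsProjBand.{v} F B ↔ F.dcomp B + B = Set.univ := by
  let := F.toLattice; have := F.isOrderedAddMonoid
  constructor
  · rintro ⟨-, h⟩
    refine Set.eq_univ_of_forall fun x => ?_
    obtain ⟨⟨b, a⟩, ⟨hb, ha, rfl⟩, -⟩ := h x
    exact Set.mem_add.2 ⟨a, ha, b, hb, add_comm a b⟩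
  · intro h
    refine ⟨⟨hB, orderClosed_of_dcomp_add_eq_univ hB h⟩, fun x => ?_⟩
    obtain ⟨a, ha, b, hb, rfl⟩ := Set.mem_add.1 (h ▸ Set.mem_univ x)
    refine ⟨(b, a), ⟨hb, ha, add_comm a b⟩, ?_⟩
    rintro ⟨b', a'⟩ ⟨hb', ha', hx⟩
    obtain ⟨rfl, rfl⟩ := eq_of_add_eq_add_of_mem_disjointComplement (B := hB.toAddSubgroup)
      ha' ha hb' hb ((add_comm a' b').trans hx.symm)
    rfl

theorem exists_isIdeal_compl_iff_dcomp_add_eq_univ (hB : F.IsIdeal B) :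
    (∃ I : Set X, F.IsIdeal I ∧ I ∩ B = {0} ∧ sumSet I B = Set.univ) ↔
      F.dcomp B + B = Set.univ := by
  let := F.toLattice; have := F.isOrderedAddMonoid
  constructor
  · rintro ⟨I, hI, hIB, hsum⟩
    rw [sumSet_eq_add] at hsum
    exact Set.eq_univ_of_univ_subset <| hsum ▸
      Set.add_subset_add (subset_disjointComplement hI.isSolid hB.isSolid hIB.subset) le_rfl
  · intro h
    exact ⟨F.dcomp B, F.isIdeal_dcomp B,
      disjointComplement_inter_eq_singleton_zero (B := hB.toAddSubgroup),
      (sumSet_eq_add _ _).trans h⟩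

end FuzzyRiesz

universe u

/-- for a fuzzy ideal `B`, the following are equivalent:
(i) `B` is a fuzzy projection band; (ii) for each `x ∈ X⁺`, `sup (B⁺ ∩ [0,x])`
exists and belongs to `B`; (iii) there is a fuzzy ideal `I` with `X = I ⊕ B`. -/
theorem projBand_tfae {X : Type*} [AddCommGroup X] [Module ℝ X]
    (F : FuzzyRiesz X) (B : Set X) (hB : F.IsIdeal B) :
    (FuzzyRiesz.IsProjBand.{u} F B ↔
      ∀ x : X, F.Pos x →
        ∃ z ∈ B, F.IsSup {y : X | y ∈ B ∧ F.Pos y ∧ 1/2 < F.μ y x} z) ∧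
    ((∀ x : X, F.Pos x →
        ∃ z ∈ B, F.IsSup {y : X | y ∈ B ∧ F.Pos y ∧ 1/2 < F.μ y x} z) ↔
      ∃ I : Set X, F.IsIdeal I ∧ I ∩ B = {0} ∧ FuzzyRiesz.sumSet I B = Set.univ) :=
  have hsup := FuzzyRiesz.forall_isSup_iff_dcomp_add_eq_univ hB
  ⟨(FuzzyRiesz.isProjBand_iff_dcomp_add_eq_univ hB).trans hsup.symm,
    hsup.trans (FuzzyRiesz.exists_isIdeal_compl_iff_dcomp_add_eq_univ hB).symm⟩
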